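/- arXiv:1705.00060 — 2 statements merged into one kernel-verified Lean document; each statement's English description precedes it below -/
import Mathlib

section
/- Let r > 0, 0 < p < 1, and n be a non-negative integer, and let π be the truncated negative binomial probability mass function on {0,1,...,n}. Then for every function f : {0,1,...,n} → ℝ there exists a function g : {0,1,...,n+1} → ℝ with g(0) = 0 and g(n+1) = 0 satisfying the Stein equation p(r+i)·g(i+1)·1{i < n} − i·g(i) = f(i) − ∑_{j=0}^{n} π_j f(j) for every i ∈ {0,1,...,n}. -/
/-- The negative binomial pmf: `P(Z = k)` for `Z ~ NB(r,p)`. -/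
noncomputable def nbPmf (r p : ℝ) (k : ℕ) : ℝ :=
  Real.Gamma (r + k) / (Real.Gamma r * k.factorial) * (1 - p) ^ r * p ^ k

/-- The truncated negative binomial pmf on `{0,...,n}`:
`π_i = P(Z = i) / P(Z ≤ n)` for `Z ~ NB(r,p)`. -/
noncomputable def truncNbPmf (r p : ℝ) (n i : ℕ) : ℝ :=
  nbPmf r p i / ∑ j ∈ Finset.range (n + 1), nbPmf r p j

/-!
The Stein operator `g ↦ β i g(i+1) 1{i<n} - i g(i)` is the generator of a birth–death chain on
`{0,…,n}` with birth rates `β i` and death rates `i`, and the truncated negative binomial law is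
its reversible measure: `(i+1) π_{i+1} = p (r+i) π_i`. Multiplying the equation by `π_i` turns
its left side into the increment `S_{i+1} - S_i` of `S_i = i π_i g(i)`, so `S_i` must be the
partial sum `∑_{j<i} π_j h_j` of the centred right side `h`. Since `h` has mean zero, this sum
vanishes at `n+1`, which is exactly the boundary condition there.
-/

open Finset

section SteinSolution

variable (π h : ℕ → ℝ)

noncomputable def steinSolution (i : ℕ) : ℝ :=
  (∑ j ∈ range i, π j * h j) / (i * π i)

@[simp]
lemma steinSolution_zero : steinSolution π h 0 = 0 := by
  simp [steinSolution]

variable {π h}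

lemma steinSolution_eq_zero_of_sum_eq_zero {i : ℕ} (hsum : ∑ j ∈ range i, π j * h j = 0) :
    steinSolution π h i = 0 := by
  simp [steinSolution, hsum]

lemma natCast_mul_steinSolution {i : ℕ} (hπ : π i ≠ 0) :
    (i : ℝ) * steinSolution π h i = (∑ j ∈ range i, π j * h j) / π i := by
  rcases eq_or_ne i 0 with rfl | hi
  · simp
  · have : (i : ℝ) ≠ 0 := Nat.cast_ne_zero.2 hi
    unfold steinSolution
    field_simp

lemma mul_steinSolution_succ {β : ℕ → ℝ} {i : ℕ} (hπ : π i ≠ 0) (hπ' : π (i + 1) ≠ 0)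
    (hbal : (i + 1 : ℝ) * π (i + 1) = β i * π i) :
    β i * steinSolution π h (i + 1) = (∑ j ∈ range (i + 1), π j * h j) / π i := by
  have hβ : β i ≠ 0 := by
    rintro hβ
    rw [hβ, zero_mul] at hbal
    exact hπ' ((mul_eq_zero.1 hbal).resolve_left (by positivity))
  unfold steinSolution
  rw [Nat.cast_succ, hbal]
  field_simp

theorem steinSolution_solves {n : ℕ} {β : ℕ → ℝ} (hπ : ∀ i ≤ n, π i ≠ 0)
    (hbal : ∀ i < n, (i + 1 : ℝ) * π (i + 1) = β i * π i)
    (hmean : ∑ j ∈ range (n + 1), π j * h j = 0) {i : ℕ} (hi : i ≤ n) :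
    β i * steinSolution π h (i + 1) * (if i < n then 1 else 0) - i * steinSolution π h i
      = h i := by
  have hπi := hπ i hi
  rw [natCast_mul_steinSolution hπi]
  rcases hi.lt_or_eq with hlt | rfl
  · rw [if_pos hlt, mul_one, mul_steinSolution_succ hπi (hπ _ hlt) (hbal i hlt),
      sum_range_succ]
    field_simp
    ring
  · rw [sum_range_succ] at hmean
    rw [if_neg (lt_irrefl i), mul_zero, zero_sub]
    field_simp
    linarith

end SteinSolution

lemma nbPmf_pos {r p : ℝ} (hr : 0 < r) (hp0 : 0 < p) (hp1 : p < 1) (k : ℕ) :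
    0 < nbPmf r p k := by
  have := Real.Gamma_pos_of_pos (show 0 < r + k by positivity)
  have := Real.Gamma_pos_of_pos hr
  have := Real.rpow_pos_of_pos (sub_pos.2 hp1) r
  unfold nbPmf
  positivity

lemma succ_mul_nbPmf_succ {r : ℝ} (hr : 0 < r) (p : ℝ) (k : ℕ) :
    (k + 1 : ℝ) * nbPmf r p (k + 1) = p * (r + k) * nbPmf r p k := by
  have hΓ : Real.Gamma (r + ↑(k + 1)) = (r + k) * Real.Gamma (r + k) := by
    rw [Nat.cast_succ, ← add_assoc, Real.Gamma_add_one (by positivity)]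
  have := (Real.Gamma_pos_of_pos hr).ne'
  unfold nbPmf
  rw [hΓ, Nat.factorial_succ, pow_succ]
  push_cast
  field_simp

lemma succ_mul_truncNbPmf_succ {r : ℝ} (hr : 0 < r) (p : ℝ) (n k : ℕ) :
    (k + 1 : ℝ) * truncNbPmf r p n (k + 1) = p * (r + k) * truncNbPmf r p n k := by
  simp only [truncNbPmf, ← mul_div_assoc, succ_mul_nbPmf_succ hr]

lemma truncNbPmf_pos {r p : ℝ} (hr : 0 < r) (hp0 : 0 < p) (hp1 : p < 1) (n i : ℕ) :
    0 < truncNbPmf r p n i :=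
  div_pos (nbPmf_pos hr hp0 hp1 i)
    (sum_pos (fun j _ => nbPmf_pos hr hp0 hp1 j) nonempty_range_add_one)

lemma sum_truncNbPmf {r p : ℝ} (hr : 0 < r) (hp0 : 0 < p) (hp1 : p < 1) (n : ℕ) :
    ∑ j ∈ range (n + 1), truncNbPmf r p n j = 1 := by
  simp only [truncNbPmf]
  rw [← sum_div, div_self]
  exact (sum_pos (fun j _ => nbPmf_pos hr hp0 hp1 j) nonempty_range_add_one).ne'

/-- Existence of a solution to the truncated negative binomial Stein equation,
vanishing at 0 and at n+1. -/
theorem truncNb_stein_equation_solution (r p : ℝ) (hr : 0 < r) (hp0 : 0 < p) (hp1 : p < 1)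
    (n : ℕ) (f : ℕ → ℝ) :
    ∃ g : ℕ → ℝ, g 0 = 0 ∧ g (n + 1) = 0 ∧
      ∀ i ≤ n,
        p * (r + i) * g (i + 1) * (if i < n then (1 : ℝ) else 0) - i * g i
          = f i - ∑ j ∈ Finset.range (n + 1), truncNbPmf r p n j * f j := by
  set c := ∑ j ∈ range (n + 1), truncNbPmf r p n j * f j
  have hmean : ∑ j ∈ range (n + 1), truncNbPmf r p n j * (f j - c) = 0 := by
    simp only [mul_sub, sum_sub_distrib, ← sum_mul, sum_truncNbPmf hr hp0 hp1, one_mul, c,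
      sub_self]
  refine ⟨steinSolution (truncNbPmf r p n) (fun j => f j - c), steinSolution_zero _ _,
    steinSolution_eq_zero_of_sum_eq_zero hmean, fun i hi => ?_⟩
  exact steinSolution_solves (β := fun i => p * (r + i))
    (fun i _ => (truncNbPmf_pos hr hp0 hp1 n i).ne') (fun i _ => succ_mul_truncNbPmf_succ hr p n i)
    hmean hi
end

section
/- In the machine-fault model with fixed parameters N ≥ 1 and R ≥ 1, let W = W(p) be the fault count, λ = λ(p) = E[W]. Then Var(W)/λ = 1 + O(p) as p → 0; that is, there exist constants K > 0 and p_0 > 0 such that for all 0 < p < p_0, | 1 − Var(W)/λ | ≤ K·p. Consequently the truncated Poisson approximation error bound (1 − π_0)·(1 − Var(W)/λ) is of order p as p → 0. -/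
/-- The Poisson pmf: `P(Z = k)` for `Z ~ Po(λ)`. -/
noncomputable def poissonPmf (lam : ℝ) (k : ℕ) : ℝ :=
  Real.exp (-lam) * lam ^ k / k.factorial

/-- The truncated Poisson pmf on `{0,...,n}`:
`π_i = P(Z = i) / P(Z ≤ n)` for `Z ~ Po(λ)`. -/
noncomputable def truncPoissonPmf (lam : ℝ) (n i : ℕ) : ℝ :=
  poissonPmf lam i / ∑ j ∈ Finset.range (n + 1), poissonPmf lam j


/-- The fault indicators of the machine-fault model: given i.i.d. Bernoulli(p)
"potential fault" variables `U i` (for days `i = 1, 2, ...`) and a repair time `R`,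
a fault occurs on day `i` iff `U i = 1` and no fault occurred in the previous `R - 1`
days: `I_i = U_i · ∏_{j = max(1, i+1-R)}^{i-1} (1 - I_j)`. -/
noncomputable def faultInd {Ω : Type*} (U : ℕ → Ω → ℝ) (R : ℕ) : ℕ → Ω → ℝ
  | i => fun ω => U i ω *
      ∏ j ∈ (Finset.Ico (max 1 (i + 1 - R)) i).attach,
        (1 - faultInd U R j.1 ω)
  termination_by i => i
  decreasing_by exact (Finset.mem_Ico.mp j.2).2

open MeasureTheory ProbabilityTheory

/-!
Two facts about the fault indicators suffice: `I_i ≤ U_i`, and `I_1 = U_1` since the first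
day has no repair window before it. Write `λ = Σ E I_i` and
`E W² = λ + D` with `D = Σ_{i ≠ k} E[I_i I_k]`, so `λ - Var W = λ² - D`. Both `λ ≤ N p` and
`D ≤ N² p²` (independence gives `E[I_i I_k] ≤ E[U_i U_k] = p²`), hence `|λ - Var W| ≤ N² p²`,
while `λ ≥ E I_1 = p`. Dividing, `|1 - Var W / λ| ≤ N² p`; and `0 ≤ π₀ ≤ 1`.
-/

lemma poissonPmf_nonneg {lam : ℝ} (hlam : 0 ≤ lam) (k : ℕ) : 0 ≤ poissonPmf lam k := by
  unfold poissonPmf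
  positivity

lemma truncPoissonPmf_nonneg {lam : ℝ} (hlam : 0 ≤ lam) (n i : ℕ) :
    0 ≤ truncPoissonPmf lam n i :=
  div_nonneg (poissonPmf_nonneg hlam i) (Finset.sum_nonneg fun j _ => poissonPmf_nonneg hlam j)

lemma truncPoissonPmf_le_one {lam : ℝ} (hlam : 0 ≤ lam) {n i : ℕ} (hi : i ≤ n) :
    truncPoissonPmf lam n i ≤ 1 :=
  div_le_one_of_le₀
    (Finset.single_le_sum (fun j _ => poissonPmf_nonneg hlam j) (Finset.mem_range_succ_iff.mpr hi))
    (Finset.sum_nonneg fun j _ => poissonPmf_nonneg hlam j)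

section IndicatorSum

variable {Ω ι : Type*} [MeasurableSpace Ω] {μ : Measure Ω} {s : Finset ι} {X : ι → Ω → ℝ}

lemma integral_eq_measureReal_of_mem_zero_one {f : Ω → ℝ} (hf : Measurable f)
    (h01 : ∀ ω, f ω = 0 ∨ f ω = 1) : ∫ ω, f ω ∂μ = μ.real {ω | f ω = 1} := by
  have hf_eq : f = Set.indicator {ω | f ω = 1} (fun _ => 1) := by
    funext ω
    rcases h01 ω with h | h <;> simp [Set.indicator, h]
  have hs : MeasurableSet {ω | f ω = 1} := hf (measurableSet_singleton 1)
  conv_lhs => rw [hf_eq]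
  rw [integral_indicator_const _ hs, smul_eq_mul, mul_one]

lemma integrable_of_mem_zero_one [IsFiniteMeasure μ] {f : Ω → ℝ} (hf : Measurable f)
    (h01 : ∀ ω, f ω = 0 ∨ f ω = 1) : Integrable f μ :=
  Integrable.of_bound hf.aestronglyMeasurable 1 <| ae_of_all _ fun ω => by
    rcases h01 ω with h | h <;> simp [h]

lemma integral_sum_sq_of_mem_zero_one [DecidableEq ι] [IsFiniteMeasure μ]
    (hX : ∀ i ∈ s, Measurable (X i)) (h01 : ∀ i ∈ s, ∀ ω, X i ω = 0 ∨ X i ω = 1) :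
    ∫ ω, (∑ i ∈ s, X i ω) ^ 2 ∂μ =
      ∑ i ∈ s, ∫ ω, X i ω ∂μ + ∑ i ∈ s, ∑ k ∈ s.erase i, ∫ ω, X i ω * X k ω ∂μ := by
  have hint : ∀ i ∈ s, ∀ k ∈ s, Integrable (fun ω => X i ω * X k ω) μ := fun i hi k hk =>
    integrable_of_mem_zero_one ((hX i hi).mul (hX k hk)) fun ω => by
      rcases h01 i hi ω with h | h <;> rcases h01 k hk ω with h' | h' <;> simp [h, h']
  have hdiag : ∀ i ∈ s, (fun ω => X i ω * X i ω) = X i := fun i hi => funext fun ω => by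
    rcases h01 i hi ω with h | h <;> simp [h]
  simp_rw [sq, Finset.sum_mul_sum]
  rw [integral_finsetSum _ fun i hi => integrable_finsetSum _ (hint i hi), ← Finset.sum_add_distrib]
  refine Finset.sum_congr rfl fun i hi => ?_
  rw [integral_finsetSum _ (hint i hi), ← Finset.add_sum_erase s _ hi, hdiag i hi]

lemma abs_integral_sub_variance_sum_le [IsProbabilityMeasure μ] (hX : ∀ i ∈ s, Measurable (X i))
    (h01 : ∀ i ∈ s, ∀ ω, X i ω = 0 ∨ X i ω = 1) {q : ℝ} (hmean : ∀ i ∈ s, ∫ ω, X i ω ∂μ ≤ q)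
    (hcross : ∀ i ∈ s, ∀ k ∈ s, i ≠ k → ∫ ω, X i ω * X k ω ∂μ ≤ q ^ 2) :
    |∫ ω, ∑ i ∈ s, X i ω ∂μ - variance (fun ω => ∑ i ∈ s, X i ω) μ| ≤ (s.card * q) ^ 2 := by
  classical
  have hint : ∀ i ∈ s, Integrable (X i) μ := fun i hi =>
    integrable_of_mem_zero_one (hX i hi) (h01 i hi)
  have hX_nonneg : ∀ i ∈ s, ∀ ω, 0 ≤ X i ω := fun i hi ω => by
    rcases h01 i hi ω with h | h <;> simp [h]
  have hX_le_one : ∀ i ∈ s, ∀ ω, X i ω ≤ 1 := fun i hi ω => by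
    rcases h01 i hi ω with h | h <;> simp [h]
  set m := ∑ i ∈ s, ∫ ω, X i ω ∂μ
  set D := ∑ i ∈ s, ∑ k ∈ s.erase i, ∫ ω, X i ω * X k ω ∂μ
  have hmemLp : MemLp (fun ω => ∑ i ∈ s, X i ω) 2 μ :=
    MemLp.of_bound (Finset.measurable_sum s hX).aestronglyMeasurable s.card <|
      ae_of_all _ fun ω => by
      rw [Real.norm_of_nonneg (Finset.sum_nonneg fun i hi => hX_nonneg i hi ω)]
      simpa using Finset.sum_le_sum fun i hi => hX_le_one i hi ω
  have hvar : variance (fun ω => ∑ i ∈ s, X i ω) μ = m + D - m ^ 2 := by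
    rw [variance_eq_sub hmemLp, integral_finsetSum _ hint]
    exact congrArg (· - m ^ 2) (integral_sum_sq_of_mem_zero_one hX h01)
  have hm_nonneg : 0 ≤ m := Finset.sum_nonneg fun i hi => integral_nonneg (hX_nonneg i hi)
  have hm_le : m ≤ s.card * q := by simpa using Finset.sum_le_sum hmean
  have hD_nonneg : 0 ≤ D := Finset.sum_nonneg fun i hi => Finset.sum_nonneg fun k hk =>
    integral_nonneg fun ω =>
      mul_nonneg (hX_nonneg i hi ω) (hX_nonneg k (Finset.mem_of_mem_erase hk) ω)
  have hD_le : D ≤ (s.card * q) ^ 2 := calc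
    D ≤ ∑ i ∈ s, ∑ k ∈ s.erase i, q ^ 2 :=
        Finset.sum_le_sum fun i hi => Finset.sum_le_sum fun k hk =>
          hcross i hi k (Finset.mem_of_mem_erase hk) (Finset.ne_of_mem_erase hk).symm
    _ ≤ ∑ i ∈ s, ∑ k ∈ s, q ^ 2 := Finset.sum_le_sum fun i _ =>
        Finset.sum_le_sum_of_subset_of_nonneg (Finset.erase_subset i s) fun _ _ _ => sq_nonneg q
    _ = (s.card * q) ^ 2 := by simp only [Finset.sum_const, nsmul_eq_mul]; ring
  have hm_sq_le : m ^ 2 ≤ (s.card * q) ^ 2 := pow_le_pow_left₀ hm_nonneg hm_le 2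
  rw [integral_finsetSum _ hint, hvar, abs_le]
  constructor <;> nlinarith

end IndicatorSum

section FaultIndicators

variable {Ω : Type*} {U : ℕ → Ω → ℝ} {R N : ℕ}

lemma faultInd_eq (U : ℕ → Ω → ℝ) (R i : ℕ) (ω : Ω) :
    faultInd U R i ω = U i ω * ∏ j ∈ Finset.Ico (max 1 (i + 1 - R)) i, (1 - faultInd U R j ω) := by
  rw [faultInd, ← Finset.prod_attach]

lemma faultInd_one (U : ℕ → Ω → ℝ) (R : ℕ) : faultInd U R 1 = U 1 := by
  funext ω
  rw [faultInd_eq, Finset.Ico_eq_empty (by omega), Finset.prod_empty, mul_one]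

lemma mem_Icc_of_mem_Ico_max {i j N : ℕ} (hj : j ∈ Finset.Ico (max 1 (i + 1 - R)) i)
    (hi : i ≤ N) : j ∈ Finset.Icc 1 N := by
  obtain ⟨hj1, hji⟩ := Finset.mem_Ico.mp hj
  exact Finset.mem_Icc.mpr ⟨le_of_max_le_left hj1, by omega⟩

lemma faultInd_eq_zero_or_eq {ω : Ω} (hU : ∀ j ∈ Finset.Icc 1 N, U j ω = 0 ∨ U j ω = 1)
    {i : ℕ} (hi : i ≤ N) : faultInd U R i ω = 0 ∨ faultInd U R i ω = U i ω := by
  induction i using Nat.strong_induction_on with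
  | _ i ih =>
    have hprod : (∏ j ∈ Finset.Ico (max 1 (i + 1 - R)) i, (1 - faultInd U R j ω)) = 0 ∨
        (∏ j ∈ Finset.Ico (max 1 (i + 1 - R)) i, (1 - faultInd U R j ω)) = 1 := by
      refine Finset.prod_induction _ (fun x => x = 0 ∨ x = 1) ?_ (Or.inr rfl) fun j hj => ?_
      · rintro a b (rfl | rfl) (rfl | rfl) <;> simp
      · have hjN := mem_Icc_of_mem_Ico_max hj hi
        rcases ih j (Finset.mem_Ico.mp hj).2 (Finset.mem_Icc.mp hjN).2 with h | h <;>
          rcases hU j hjN with h' | h' <;> simp [h, h']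
    rw [faultInd_eq]
    rcases hprod with h | h <;> simp [h]

lemma faultInd_mem_zero_one {ω : Ω} (hU : ∀ j ∈ Finset.Icc 1 N, U j ω = 0 ∨ U j ω = 1)
    {i : ℕ} (hi : i ∈ Finset.Icc 1 N) : faultInd U R i ω = 0 ∨ faultInd U R i ω = 1 := by
  rcases faultInd_eq_zero_or_eq (R := R) hU (Finset.mem_Icc.mp hi).2 with h | h
  · exact Or.inl h
  · rw [h]; exact hU i hi

lemma faultInd_nonneg {ω : Ω} (hU : ∀ j ∈ Finset.Icc 1 N, U j ω = 0 ∨ U j ω = 1)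
    {i : ℕ} (hi : i ∈ Finset.Icc 1 N) : 0 ≤ faultInd U R i ω := by
  rcases faultInd_mem_zero_one (R := R) hU hi with h | h <;> simp [h]

lemma faultInd_le {ω : Ω} (hU : ∀ j ∈ Finset.Icc 1 N, U j ω = 0 ∨ U j ω = 1)
    {i : ℕ} (hi : i ∈ Finset.Icc 1 N) : faultInd U R i ω ≤ U i ω := by
  rcases faultInd_eq_zero_or_eq (R := R) hU (Finset.mem_Icc.mp hi).2 with h | h
  · rw [h]; rcases hU i hi with h' | h' <;> simp [h']
  · exact h.le

lemma measurable_faultInd [MeasurableSpace Ω] (hU : ∀ j ∈ Finset.Icc 1 N, Measurable (U j))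
    {i : ℕ} (hi : i ∈ Finset.Icc 1 N) : Measurable (faultInd U R i) := by
  induction i using Nat.strong_induction_on with
  | _ i ih =>
    rw [funext (faultInd_eq U R i)]
    exact (hU i hi).mul <| Finset.measurable_prod _ fun j hj => measurable_const.sub <|
      ih j (Finset.mem_Ico.mp hj).2 (mem_Icc_of_mem_Ico_max hj (Finset.mem_Icc.mp hi).2)

end FaultIndicators

lemma indepFun_of_iIndepFun_succ {Ω : Type*} [MeasurableSpace Ω] {μ : Measure Ω} {N : ℕ}
    {U : ℕ → Ω → ℝ} (hU : iIndepFun (fun i : Fin N => U ((i : ℕ) + 1)) μ) {i k : ℕ}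
    (hi : i ∈ Finset.Icc 1 N) (hk : k ∈ Finset.Icc 1 N) (hik : i ≠ k) : IndepFun (U i) (U k) μ := by
  obtain ⟨hi1, hiN⟩ := Finset.mem_Icc.mp hi
  obtain ⟨hk1, hkN⟩ := Finset.mem_Icc.mp hk
  have h := hU.indepFun (i := ⟨i - 1, by omega⟩) (j := ⟨k - 1, by omega⟩)
    (by simp only [ne_eq, Fin.mk.injEq]; omega)
  simpa only [Nat.sub_add_cancel hi1, Nat.sub_add_cancel hk1] using h

structure IsBernoulliTrials {Ω : Type*} [MeasurableSpace Ω] (μ : Measure Ω) (U : ℕ → Ω → ℝ)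
    (N : ℕ) (p : ℝ) : Prop where
  measurable : ∀ i ∈ Finset.Icc 1 N, Measurable (U i)
  mem_zero_one : ∀ i ∈ Finset.Icc 1 N, ∀ ω, U i ω = 0 ∨ U i ω = 1
  measure_eq_one : ∀ i ∈ Finset.Icc 1 N, μ {ω | U i ω = 1} = ENNReal.ofReal p
  iIndepFun : iIndepFun (fun i : Fin N => U ((i : ℕ) + 1)) μ

namespace IsBernoulliTrials

variable {Ω : Type*} [MeasurableSpace Ω] {μ : Measure Ω} {U : ℕ → Ω → ℝ} {N R : ℕ} {p : ℝ}

lemma integral_eq (hU : IsBernoulliTrials μ U N p) (hp : 0 ≤ p) {i : ℕ}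
    (hi : i ∈ Finset.Icc 1 N) : ∫ ω, U i ω ∂μ = p := by
  rw [integral_eq_measureReal_of_mem_zero_one (hU.measurable i hi) (hU.mem_zero_one i hi),
    measureReal_def, hU.measure_eq_one i hi, ENNReal.toReal_ofReal hp]

lemma integrable [IsFiniteMeasure μ] (hU : IsBernoulliTrials μ U N p) {i : ℕ}
    (hi : i ∈ Finset.Icc 1 N) : Integrable (U i) μ :=
  integrable_of_mem_zero_one (hU.measurable i hi) (hU.mem_zero_one i hi)

lemma faultInd_mem_zero_one (hU : IsBernoulliTrials μ U N p) {i : ℕ} (hi : i ∈ Finset.Icc 1 N)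
    (ω : Ω) : faultInd U R i ω = 0 ∨ faultInd U R i ω = 1 :=
  _root_.faultInd_mem_zero_one (fun j hj => hU.mem_zero_one j hj ω) hi

lemma faultInd_nonneg (hU : IsBernoulliTrials μ U N p) {i : ℕ} (hi : i ∈ Finset.Icc 1 N)
    (ω : Ω) : 0 ≤ faultInd U R i ω :=
  _root_.faultInd_nonneg (fun j hj => hU.mem_zero_one j hj ω) hi

lemma faultInd_le (hU : IsBernoulliTrials μ U N p) {i : ℕ} (hi : i ∈ Finset.Icc 1 N)
    (ω : Ω) : faultInd U R i ω ≤ U i ω :=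
  _root_.faultInd_le (fun j hj => hU.mem_zero_one j hj ω) hi

lemma integrable_faultInd [IsFiniteMeasure μ] (hU : IsBernoulliTrials μ U N p) {i : ℕ}
    (hi : i ∈ Finset.Icc 1 N) : Integrable (faultInd U R i) μ :=
  integrable_of_mem_zero_one (measurable_faultInd hU.measurable hi) (hU.faultInd_mem_zero_one hi)

lemma integral_faultInd_le [IsFiniteMeasure μ] (hU : IsBernoulliTrials μ U N p) (hp : 0 ≤ p) {i : ℕ}
    (hi : i ∈ Finset.Icc 1 N) : ∫ ω, faultInd U R i ω ∂μ ≤ p :=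
  hU.integral_eq hp hi ▸
    integral_mono (hU.integrable_faultInd hi) (hU.integrable hi) (hU.faultInd_le hi)

lemma integral_faultInd_mul_le [IsFiniteMeasure μ] (hU : IsBernoulliTrials μ U N p)
    (hp : 0 ≤ p) {i k : ℕ} (hi : i ∈ Finset.Icc 1 N) (hk : k ∈ Finset.Icc 1 N) (hik : i ≠ k) :
    ∫ ω, faultInd U R i ω * faultInd U R k ω ∂μ ≤ p ^ 2 := by
  have hindep := indepFun_of_iIndepFun_succ hU.iIndepFun hi hk hik
  calc ∫ ω, faultInd U R i ω * faultInd U R k ω ∂μ ≤ ∫ ω, U i ω * U k ω ∂μ :=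
        integral_mono_of_nonneg
          (ae_of_all _ fun ω => mul_nonneg (hU.faultInd_nonneg hi ω) (hU.faultInd_nonneg hk ω))
          (hindep.integrable_mul (hU.integrable hi) (hU.integrable hk))
          (ae_of_all _ fun ω => mul_le_mul (hU.faultInd_le hi ω) (hU.faultInd_le hk ω)
            (hU.faultInd_nonneg hk ω)
            ((hU.faultInd_nonneg (R := R) hi ω).trans (hU.faultInd_le hi ω)))
    _ = p ^ 2 := by
      rw [hindep.integral_fun_mul_eq_mul_integral (hU.measurable i hi).aestronglyMeasurable
        (hU.measurable k hk).aestronglyMeasurable, hU.integral_eq hp hi, hU.integral_eq hp hk, sq]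

lemma le_integral_sum_faultInd [IsFiniteMeasure μ] (hU : IsBernoulliTrials μ U N p)
    (hp : 0 ≤ p) (hN : 1 ≤ N) :
    p ≤ ∫ ω, ∑ i ∈ Finset.Icc 1 N, faultInd U R i ω ∂μ := by
  have h1 : 1 ∈ Finset.Icc 1 N := Finset.mem_Icc.mpr ⟨le_rfl, hN⟩
  rw [integral_finsetSum _ fun i hi => hU.integrable_faultInd hi]
  calc p = ∫ ω, faultInd U R 1 ω ∂μ := by rw [faultInd_one, hU.integral_eq hp h1]
    _ ≤ ∑ i ∈ Finset.Icc 1 N, ∫ ω, faultInd U R i ω ∂μ :=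
        Finset.single_le_sum (f := fun i => ∫ ω, faultInd U R i ω ∂μ)
          (fun i hi => integral_nonneg (hU.faultInd_nonneg hi)) h1

lemma abs_integral_sub_variance_sum_faultInd_le [IsProbabilityMeasure μ]
    (hU : IsBernoulliTrials μ U N p) (hp : 0 ≤ p) :
    |∫ ω, ∑ i ∈ Finset.Icc 1 N, faultInd U R i ω ∂μ -
        variance (fun ω => ∑ i ∈ Finset.Icc 1 N, faultInd U R i ω) μ| ≤ N ^ 2 * p ^ 2 := by
  simpa [mul_pow] using abs_integral_sub_variance_sum_le
    (fun i hi => measurable_faultInd hU.measurable hi) (fun i hi => hU.faultInd_mem_zero_one hi)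
    (fun i hi => hU.integral_faultInd_le hp hi)
    fun i hi k hk => hU.integral_faultInd_mul_le hp hi hk

end IsBernoulliTrials

lemma abs_one_sub_div_le {lam v p C : ℝ} (hp : 0 < p) (hlam : p ≤ lam)
    (h : |lam - v| ≤ C * p ^ 2) : |1 - v / lam| ≤ C * p := by
  have hlam_pos : 0 < lam := hp.trans_le hlam
  rw [show 1 - v / lam = (lam - v) / lam by field_simp, abs_div, abs_of_pos hlam_pos,
    div_le_iff₀ hlam_pos]
  have hC : 0 ≤ C := nonneg_of_mul_nonneg_left ((abs_nonneg _).trans h) (by positivity)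
  nlinarith [mul_le_mul_of_nonneg_left hlam (mul_nonneg hC hp.le)]

lemma abs_one_sub_mul_le_abs {a x : ℝ} (ha₀ : 0 ≤ a) (ha₁ : a ≤ 1) : |(1 - a) * x| ≤ |x| := by
  rw [abs_mul]
  exact mul_le_of_le_one_left (abs_nonneg x) (abs_le.mpr ⟨by linarith, by linarith⟩)

theorem machineFault_bound_order_p_general (N R : ℕ) (hN : 1 ≤ N) :
    ∃ K > (0 : ℝ), ∃ p₀ > (0 : ℝ), ∀ p : ℝ, 0 < p → p < p₀ →
      ∀ (Ω : Type) [MeasurableSpace Ω] (μ : Measure Ω) [IsProbabilityMeasure μ]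
        (U : ℕ → Ω → ℝ),
        (∀ i ∈ Finset.Icc 1 N, Measurable (U i)) →
        (∀ i ∈ Finset.Icc 1 N, ∀ ω, U i ω = 0 ∨ U i ω = 1) →
        (∀ i ∈ Finset.Icc 1 N, μ {ω | U i ω = 1} = ENNReal.ofReal p) →
        iIndepFun (fun i : Fin N => U ((i : ℕ) + 1)) μ →
        ∀ (W : Ω → ℝ), W = (fun ω => ∑ i ∈ Finset.Icc 1 N, faultInd U R i ω) →
        ∀ (lam : ℝ), lam = ∫ ω, W ω ∂μ →
        |1 - variance W μ / lam| ≤ K * p ∧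
        |(1 - truncPoissonPmf lam (N / R + 1) 0) * (1 - variance W μ / lam)| ≤ K * p := by
  refine ⟨N ^ 2, by positivity, 1, one_pos,
    fun p hp _ Ω _ μ _ U hmeas hval hprob hindep W hW lam hlam => ?_⟩
  have hU : IsBernoulliTrials μ U N p := ⟨hmeas, hval, hprob, hindep⟩
  have hp_le : p ≤ lam := hlam ▸ hW ▸ hU.le_integral_sum_faultInd hp.le hN
  have hclose : |lam - variance W μ| ≤ N ^ 2 * p ^ 2 := by
    subst hW hlam
    exact hU.abs_integral_sub_variance_sum_faultInd_le hp.le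
  have hratio := abs_one_sub_div_le hp hp_le hclose
  have hπ₀ := abs_one_sub_mul_le_abs (x := 1 - variance W μ / lam)
    (truncPoissonPmf_nonneg (hp.le.trans hp_le) _ _)
    (truncPoissonPmf_le_one (hp.le.trans hp_le) (Nat.zero_le (N / R + 1)))
  exact ⟨hratio, hπ₀.trans hratio⟩

/-- In the machine-fault model with fixed `N ≥ 1` and `R ≥ 1`, `Var W / λ = 1 + O(p)`
as `p → 0`: there are `K > 0` and `p₀ > 0` such that for all `0 < p < p₀` and every
realization of the model, `|1 - Var W / λ| ≤ K p`; consequently the truncated Poisson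
error bound `(1 - π₀)(1 - Var W / λ)` is of order `p`. -/
theorem machineFault_bound_order_p (N R : ℕ) (hN : 1 ≤ N) (hR : 1 ≤ R) :
    ∃ K > (0 : ℝ), ∃ p₀ > (0 : ℝ), ∀ p : ℝ, 0 < p → p < p₀ →
      ∀ (Ω : Type) [MeasurableSpace Ω] (μ : Measure Ω) [IsProbabilityMeasure μ]
        (U : ℕ → Ω → ℝ),
        (∀ i ∈ Finset.Icc 1 N, Measurable (U i)) →
        (∀ i ∈ Finset.Icc 1 N, ∀ ω, U i ω = 0 ∨ U i ω = 1) →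
        (∀ i ∈ Finset.Icc 1 N, μ {ω | U i ω = 1} = ENNReal.ofReal p) →
        iIndepFun (fun i : Fin N => U ((i : ℕ) + 1)) μ →
        ∀ (W : Ω → ℝ), W = (fun ω => ∑ i ∈ Finset.Icc 1 N, faultInd U R i ω) →
        ∀ (lam : ℝ), lam = ∫ ω, W ω ∂μ →
        |1 - variance W μ / lam| ≤ K * p ∧
        |(1 - truncPoissonPmf lam (N / R + 1) 0) * (1 - variance W μ / lam)| ≤ K * p :=
  machineFault_bound_order_p_general N R hN
end
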